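/- Let M be a monoid, R a ring, and f a central idempotent of R. Regard fR and (1−f)R as non-unital subrings of R (each is closed under addition, negation, and multiplication). If both fR and (1−f)R are M-central Armendariz (i.e., for all α, β in the monoid algebra over fR with αβ = 0, each coefficient product (α g)·(β h) commutes with every element of fR, and similarly for (1−f)R), then R is M-central Armendariz. -/

import Mathlib

/-!
For a central idempotent `e`, left multiplication by `e` is a non-unital ring homomorphism
`R → eR`. Applied coefficientwise it turns `αβ = 0` into a vanishing convolution over `eR`, so the
Armendariz property of `eR` makes `e (α g β h)` commute with `eR`. Since `x ↦ (fx, (1 - f)x)`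
splits `R` as the product `fR × (1 - f)R`, the two corner statements together say that
`α g β h` commutes with all of `R`.
-/

noncomputable def nonUnitalConv {M S : Type*} [Mul M] [NonUnitalNonAssocRing S]
    (α β : M →₀ S) : M →₀ S :=
  α.sum fun g a => β.sum fun h b => Finsupp.single (g * h) (a * b)

def IsCentralArmendariz (M S : Type*) [Mul M] [NonUnitalNonAssocRing S] : Prop :=
  ∀ α β : M →₀ S, nonUnitalConv α β = 0 →
    ∀ g ∈ α.support, ∀ h ∈ β.support, ∀ s : S, α g * β h * s = s * (α g * β h)

section Convolution

variable {M R S : Type*} [Mul M]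

theorem nonUnitalConv_mapRange [NonUnitalNonAssocRing R] [NonUnitalNonAssocRing S]
    (φ : R →ₙ+* S) (α β : M →₀ R) :
    nonUnitalConv (α.mapRange φ (map_zero φ)) (β.mapRange φ (map_zero φ)) =
      (nonUnitalConv α β).mapRange φ (map_zero φ) := by
  unfold nonUnitalConv
  rw [Finsupp.sum_mapRange_index (by simp)]
  simp only [Finsupp.sum, Finsupp.mapRange_finsetSum, Finsupp.mapRange_single, map_mul]
  refine Finset.sum_congr rfl fun g _ => ?_
  exact Finsupp.sum_mapRange_index (h := fun h b => Finsupp.single (g * h) (φ (α g) * b))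
    (by simp)

theorem MonoidAlgebra.coeff_mul_eq_nonUnitalConv [Ring R] (α β : MonoidAlgebra R M) :
    (α * β).coeff = nonUnitalConv α.coeff β.coeff := by
  simp only [MonoidAlgebra.mul_def, MonoidAlgebra.coeff_finsuppSum, MonoidAlgebra.coeff_single]
  rfl

theorem IsCentralArmendariz.commute_map_coeff_mul [Ring R] [NonUnitalNonAssocRing S]
    (hS : IsCentralArmendariz M S) (φ : R →ₙ+* S) {α β : MonoidAlgebra R M} (h0 : α * β = 0)
    (g h : M) (s : S) : Commute (φ (α.coeff g * β.coeff h)) s := by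
  by_cases hg : φ (α.coeff g) = 0
  · simp [hg]
  by_cases hh : φ (β.coeff h) = 0
  · simp [hh]
  have hconv : nonUnitalConv (α.coeff.mapRange φ (map_zero φ))
      (β.coeff.mapRange φ (map_zero φ)) = 0 := by
    rw [nonUnitalConv_mapRange, ← MonoidAlgebra.coeff_mul_eq_nonUnitalConv, h0]
    simp
  rw [map_mul]
  exact hS _ _ hconv g (by simpa using hg) h (by simpa using hh) s

end Convolution

section CentralIdempotent

variable {R : Type*}

def IsIdempotentElem.mulLeftOfMemCenter [NonUnitalSemiring R] {e : R} (he : IsIdempotentElem e)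
    (hc : e ∈ Set.center R) : R →ₙ+* R where
  toFun := (e * ·)
  map_mul' x y := by
    rw [mul_assoc, ← mul_assoc x, Semigroup.mem_center_iff.mp hc x, mul_assoc e x y,
      ← mul_assoc e e, he.eq]
  map_zero' := mul_zero e
  map_add' := mul_add e

theorem IsIdempotentElem.mul_mul_comm_of_commute [NonUnitalSemiring R] {e x y : R}
    (he : IsIdempotentElem e) (hc : e ∈ Set.center R) (h : Commute (e * x) (e * y)) :
    e * (x * y) = e * (y * x) :=
  ((he.mulLeftOfMemCenter hc).map_mul x y).trans <|
    h.eq.trans ((he.mulLeftOfMemCenter hc).map_mul y x).symm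

theorem IsIdempotentElem.commute_of_commute_mul_left [Ring R] {e x y : R}
    (he : IsIdempotentElem e) (hc : e ∈ Set.center R)
    (h₁ : Commute (e * x) (e * y)) (h₂ : Commute ((1 - e) * x) ((1 - e) * y)) :
    Commute x y := by
  have hc' : 1 - e ∈ Set.center R := (Subring.center R).sub_mem (one_mem _) hc
  calc x * y = e * (x * y) + (1 - e) * (x * y) := by rw [← add_mul, add_sub_cancel, one_mul]
    _ = e * (y * x) + (1 - e) * (y * x) := by
      rw [he.mul_mul_comm_of_commute hc h₁, he.one_sub.mul_mul_comm_of_commute hc' h₂]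
    _ = y * x := by rw [← add_mul, add_sub_cancel, one_mul]

theorem IsCentralArmendariz.commute_mul_left_coeff_mul {M : Type*} [Mul M] [Ring R] {e : R}
    (he : IsIdempotentElem e) (hc : e ∈ Set.center R) {S : NonUnitalSubring R}
    (hS : ∀ r, e * r ∈ S) (hA : IsCentralArmendariz M S) {α β : MonoidAlgebra R M}
    (h0 : α * β = 0) (g h : M) (r : R) :
    Commute (e * (α.coeff g * β.coeff h)) (e * r) :=
  (hA.commute_map_coeff_mul (NonUnitalRingHom.codRestrict (he.mulLeftOfMemCenter hc) S hS) h0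
    g h ⟨e * r, hS r⟩).map (NonUnitalSubringClass.subtype S)

end CentralIdempotent

/-- If `f` is a central idempotent of `R` such that the non-unital subrings `fR` and `(1-f)R`
are `M`-central Armendariz, then `R` is `M`-central Armendariz. -/
theorem stmt_4 (M R : Type*) [Monoid M] [Ring R] (f : R)
    (hf : IsIdempotentElem f) (hfc : f ∈ Set.center R)
    (S T : NonUnitalSubring R)
    (hS : ∀ x : R, x ∈ S ↔ ∃ r : R, x = f * r)
    (hT : ∀ x : R, x ∈ T ↔ ∃ r : R, x = (1 - f) * r)
    (hSA : ∀ α β : M →₀ S, nonUnitalConv α β = 0 →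
      ∀ g ∈ α.support, ∀ h ∈ β.support, ∀ s : S, α g * β h * s = s * (α g * β h))
    (hTA : ∀ α β : M →₀ T, nonUnitalConv α β = 0 →
      ∀ g ∈ α.support, ∀ h ∈ β.support, ∀ t : T, α g * β h * t = t * (α g * β h)) :
    ∀ α β : MonoidAlgebra R M, α * β = 0 →
      ∀ g ∈ α.coeff.support, ∀ h ∈ β.coeff.support, α.coeff g * β.coeff h ∈ Set.center R := by
  intro α β h0 g _ h _
  rw [Semigroup.mem_center_iff]
  intro r
  have hfc' : 1 - f ∈ Set.center R := (Subring.center R).sub_mem (one_mem _) hfc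
  refine (hf.commute_of_commute_mul_left hfc ?_ ?_).symm
  · exact IsCentralArmendariz.commute_mul_left_coeff_mul hf hfc (fun r => (hS _).2 ⟨r, rfl⟩)
      hSA h0 g h r
  · exact IsCentralArmendariz.commute_mul_left_coeff_mul hf.one_sub hfc'
      (fun r => (hT _).2 ⟨r, rfl⟩) hTA h0 g h r
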